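/- arXiv:1307.0518 — 4 statements merged into one kernel-verified Lean document; each statement's English description precedes it below -/
import Mathlib

section
/- The trivial module ℤ admits a finite free resolution over the group ring ℤ[G] of length 3 with free modules of ranks 1, 3, 3, 1; that is, there is an exact sequence of ℤ[G]-modules 0 → ℤ[G] → ℤ[G]³ → ℤ[G]³ → ℤ[G] → ℤ → 0, where the final map is the augmentation map onto the trivial module ℤ. -/
/-!
`G` has the presentation `⟨x, y, t | [x, y], t x t⁻¹ = σ x, t y t⁻¹ = σ y⟩` (`σ = θ`), and the
resolution is the one read off from it by Fox calculus: it is the mapping cone of `t - σ` on the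
Koszul resolution `0 → ℤ[ℤ²] → ℤ[ℤ²]² → ℤ[ℤ²] → ℤ` over `ℤ[ℤ²]`. Exactness is checked by
viewing `ℤ[G] = ⨁ₖ tᵏ ℤ[ℤ²]` as a free right `ℤ[ℤ²]`-module: relations whose coefficients lie
in `ℤ[ℤ²]` are solved one `t`-degree at a time by exactness of the Koszul complex; the `t`-terms
are removed by the projection `ℤ[G] → ℤ[t, t⁻¹]`, whose kernel is the left ideal generated by
`x - 1` and `y - 1`; and injectivity of the last map comes from comparing top `t`-degrees.
-/

/-- The automorphism of `ℤ²` (written multiplicatively) induced by a matrix `θ ∈ GL(2, ℤ)`. -/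
noncomputable def torusAut (θ : GL (Fin 2) ℤ) : MulAut (Multiplicative (Fin 2 → ℤ)) :=
  AddEquiv.toMultiplicative
    ((LinearMap.GeneralLinearGroup.generalLinearEquiv ℤ (Fin 2 → ℤ)
      (Matrix.GeneralLinearGroup.toLin θ)).toAddEquiv)

/-- The action of `ℤ` on `ℤ²` in which the generator `1 ∈ ℤ` acts via `θ`. -/
noncomputable def torusAction (θ : GL (Fin 2) ℤ) :
    Multiplicative ℤ →* MulAut (Multiplicative (Fin 2 → ℤ)) :=
  zpowersHom _ (torusAut θ)

/-- The fundamental group `G = ℤ² ⋊_θ ℤ` of the torus bundle with monodromy `θ`. -/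
noncomputable def TorusBundleGroup (θ : GL (Fin 2) ℤ) : Type :=
  SemidirectProduct (Multiplicative (Fin 2 → ℤ)) (Multiplicative ℤ) (torusAction θ)

noncomputable instance (θ : GL (Fin 2) ℤ) : Group (TorusBundleGroup θ) :=
  inferInstanceAs (Group (SemidirectProduct _ _ _))

/-- The augmentation map `ℤ[G] → ℤ`, sending every group element to `1`. -/
noncomputable def augmentation (G : Type) [Group G] : MonoidAlgebra ℤ G →+* ℤ :=
  (MonoidAlgebra.lift ℤ ℤ G 1).toRingHom

namespace TorusBundle

open MonoidAlgebra SemidirectProduct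

section GroupRing

variable {G Q : Type} [Group G] [Group Q]

@[simp]
lemma augmentation_single (g : G) (z : ℤ) : augmentation G (single g z) = z := by
  simp [augmentation, lift_single]

lemma augmentation_surjective : Function.Surjective (augmentation G) := fun z =>
  ⟨single 1 z, augmentation_single 1 z⟩

lemma augmentation_mapDomainRingHom (f : G →* Q) (r : MonoidAlgebra ℤ G) :
    augmentation Q (mapDomainRingHom ℤ f r) = augmentation G r := by
  induction r using MonoidAlgebra.induction_linear with
  | zero => simp
  | add r s hr hs => simp only [map_add, hr, hs]
  | single g z => simp

lemma of_sub_one_ne_zero {g : G} (hg : g ≠ 1) : of ℤ G g - 1 ≠ 0 := by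
  rw [sub_ne_zero, ← map_one (of ℤ G)]
  exact fun h => hg (of_injective h)

lemma of_sub_one_mem_span_of_mem_closure {U : Set G} {g : G} (hg : g ∈ Subgroup.closure U) :
    of ℤ G g - 1 ∈ Ideal.span ((fun u => of ℤ G u - 1) '' U) := by
  induction hg using Subgroup.closure_induction with
  | mem u hu => exact Ideal.subset_span ⟨u, hu, rfl⟩
  | one => rw [map_one, sub_self]; exact zero_mem _
  | mul x y _ _ hx hy =>
    have : of ℤ G (x * y) - 1 = of ℤ G x * (of ℤ G y - 1) + (of ℤ G x - 1) := by
      rw [map_mul]; noncomm_ring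
    rw [this]
    exact add_mem (Ideal.mul_mem_left _ _ hy) hx
  | inv x _ hx =>
    have : of ℤ G x⁻¹ - 1 = -(of ℤ G x⁻¹ * (of ℤ G x - 1)) := by
      rw [mul_sub, ← map_mul, inv_mul_cancel, map_one]; noncomm_ring
    rw [this]
    exact neg_mem (Ideal.mul_mem_left _ _ hx)

lemma sub_mapDomain_mem_span {U : Set G} (π : G → G)
    (hπ : ∀ g, (π g)⁻¹ * g ∈ Subgroup.closure U) (r : MonoidAlgebra ℤ G) :
    r - mapDomain π r ∈ Ideal.span ((fun u => of ℤ G u - 1) '' U) := by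
  induction r using MonoidAlgebra.induction_linear with
  | zero => simp
  | add r s hr hs =>
    rw [mapDomain_add, add_sub_add_comm]
    exact add_mem hr hs
  | single g z =>
    have : single g z - mapDomain π (single g z) =
        single (π g) z * (of ℤ G ((π g)⁻¹ * g) - 1) := by
      rw [mapDomain_single, mul_sub, mul_one, of_apply, single_mul_single, mul_one,
        mul_inv_cancel_left]
    rw [this]
    exact Ideal.mul_mem_left _ _ (of_sub_one_mem_span_of_mem_closure (hπ g))

lemma mem_span_of_augmentation_eq_zero {U : Set G} (hU : Subgroup.closure U = ⊤)
    {r : MonoidAlgebra ℤ G} (hr : augmentation G r = 0) :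
    r ∈ Ideal.span ((fun u => of ℤ G u - 1) '' U) := by
  have hcollapse : ∀ s : MonoidAlgebra ℤ G,
      mapDomain (fun _ => (1 : G)) s = single 1 (augmentation G s) := by
    intro s
    induction s using MonoidAlgebra.induction_linear with
    | zero => simp
    | add s s' hs hs' => rw [mapDomain_add, hs, hs', map_add, single_add]
    | single g z => simp
  simpa [hcollapse, hr] using sub_mapDomain_mem_span (U := U) (fun _ => 1) (by simp [hU]) r

lemma mem_span_of_mapDomainRingHom_eq_zero {f : G →* Q} (hf : Function.Surjective f)
    {U : Set G} (hU : Subgroup.closure U = f.ker) {r : MonoidAlgebra ℤ G}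
    (hr : mapDomainRingHom ℤ f r = 0) :
    r ∈ Ideal.span ((fun u => of ℤ G u - 1) '' U) := by
  have hcomp : ∀ s : MonoidAlgebra ℤ G, mapDomain (Function.surjInv hf ∘ f) s =
      mapDomain (Function.surjInv hf) (mapDomainRingHom ℤ f s) := by
    intro s
    induction s using MonoidAlgebra.induction_linear with
    | zero => simp
    | add s s' hs hs' => simp only [map_add, mapDomain_add, hs, hs']
    | single g z => simp
  have := sub_mapDomain_mem_span (U := U) (Function.surjInv hf ∘ f) (fun g => by
    rw [hU, MonoidHom.mem_ker, map_mul, map_inv, Function.comp_apply,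
      Function.surjInv_eq hf, inv_mul_cancel]) r
  rwa [hcomp, hr, mapDomain_zero, sub_zero] at this

end GroupRing

def HasKoszulSyzygies {S : Type*} [CommRing S] (c d : S) : Prop :=
  ∀ p q : S, p * c + q * d = 0 → ∃ w, p = w * d ∧ q = -(w * c)

lemma HasKoszulSyzygies.map {S : Type*} [CommRing S] {c d : S} (h : HasKoszulSyzygies c d)
    (E : S ≃+* S) : HasKoszulSyzygies (E c) (E d) := by
  intro p q hpq
  obtain ⟨w, hp, hq⟩ := h (E.symm p) (E.symm q) (by simpa using congrArg E.symm hpq)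
  exact ⟨E w, by simpa using congrArg E hp, by simpa using congrArg E hq⟩

section Lattice

abbrev Z2 : Type := Multiplicative (Fin 2 → ℤ)

def stdGen (i : Fin 2) : Z2 := Multiplicative.ofAdd (Pi.single i 1)

lemma eq_stdGen_zpow_mul_stdGen_zpow (v : Z2) :
    v = stdGen 0 ^ Multiplicative.toAdd v 0 * stdGen 1 ^ Multiplicative.toAdd v 1 := by
  apply Multiplicative.toAdd.injective
  funext i
  fin_cases i <;> simp [stdGen]

lemma closure_pair_stdGen (φ : MulAut Z2) :
    Subgroup.closure {φ (stdGen 0), φ (stdGen 1)} = ⊤ := by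
  have hstd : Subgroup.closure {stdGen 0, stdGen 1} = ⊤ := by
    refine eq_top_iff.mpr fun v _ => ?_
    rw [eq_stdGen_zpow_mul_stdGen_zpow v]
    exact mul_mem (zpow_mem (Subgroup.subset_closure (by simp)) _)
      (zpow_mem (Subgroup.subset_closure (by simp)) _)
  rw [← Set.image_pair, show ⇑φ = ⇑φ.toMonoidHom from rfl, ← MonoidHom.map_closure, hstd,
    Subgroup.map_top_of_surjective]
  exact φ.surjective

def fstCoord : Z2 →* Multiplicative ℤ := (Pi.evalAddMonoidHom (fun _ => ℤ) 0).toMultiplicative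

@[simp]
lemma fstCoord_apply (v : Z2) :
    fstCoord v = Multiplicative.ofAdd (Multiplicative.toAdd v 0) := rfl

lemma fstCoord_surjective : Function.Surjective fstCoord := fun k =>
  ⟨stdGen 0 ^ Multiplicative.toAdd k, by simp [stdGen]⟩

lemma ker_fstCoord : fstCoord.ker = Subgroup.closure {stdGen 1} := by
  refine le_antisymm (fun v hv => ?_) ((Subgroup.closure_le _).mpr ?_)
  · have h0 : Multiplicative.toAdd v 0 = 0 := by simpa using hv
    rw [eq_stdGen_zpow_mul_stdGen_zpow v, h0, zpow_zero, one_mul]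
    exact zpow_mem (Subgroup.subset_closure (Set.mem_singleton _)) _
  · rw [Set.singleton_subset_iff, SetLike.mem_coe, MonoidHom.mem_ker, fstCoord_apply]
    simp [stdGen]

lemma hasKoszulSyzygies_std :
    HasKoszulSyzygies (of ℤ Z2 (stdGen 0) - 1) (of ℤ Z2 (stdGen 1) - 1) := by
  intro p q h
  have he0 : mapDomainRingHom ℤ fstCoord (of ℤ Z2 (stdGen 0)) =
      of ℤ _ (Multiplicative.ofAdd 1) := by
    simp [stdGen]
  have he1 : mapDomainRingHom ℤ fstCoord (of ℤ Z2 (stdGen 1)) = 1 := by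
    simp [stdGen, one_def]
  have hfst : mapDomainRingHom ℤ fstCoord p * (of ℤ _ (Multiplicative.ofAdd 1) - 1) = 0 := by
    have := congrArg (mapDomainRingHom ℤ fstCoord) h
    rwa [map_add, map_mul, map_mul, map_sub, map_sub, map_one, he0, he1, sub_self, mul_zero,
      add_zero, map_zero] at this
  have hp : mapDomainRingHom ℤ fstCoord p = 0 :=
    (mul_eq_zero.mp hfst).resolve_right (of_sub_one_ne_zero (by simp))
  have hspan := mem_span_of_mapDomainRingHom_eq_zero fstCoord_surjective ker_fstCoord.symm hp
  rw [Set.image_singleton] at hspan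
  obtain ⟨w, rfl⟩ := Ideal.mem_span_singleton'.mp hspan
  refine ⟨w, rfl, ?_⟩
  have hq : (q + w * (of ℤ Z2 (stdGen 0) - 1)) * (of ℤ Z2 (stdGen 1) - 1) = 0 := by
    rw [← h]; ring
  exact eq_neg_of_add_eq_zero_left ((mul_eq_zero.mp hq).resolve_right
    (of_sub_one_ne_zero (by simp [stdGen])))

noncomputable def augGen (φ : MulAut Z2) (i : Fin 2) : MonoidAlgebra ℤ Z2 :=
  of ℤ Z2 (φ (stdGen i)) - 1

lemma augmentation_augGen (φ : MulAut Z2) (i : Fin 2) : augmentation Z2 (augGen φ i) = 0 := by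
  simp [augGen]

lemma augGen_ne_zero (φ : MulAut Z2) (i : Fin 2) : augGen φ i ≠ 0 := by
  refine of_sub_one_ne_zero fun h => ?_
  have := congrArg (fun v : Z2 => Multiplicative.toAdd v i)
    (φ.injective (h.trans (map_one φ).symm))
  simp [stdGen] at this

lemma hasKoszulSyzygies (φ : MulAut Z2) : HasKoszulSyzygies (augGen φ 0) (augGen φ 1) := by
  simpa [augGen] using hasKoszulSyzygies_std.map (domCongr ℤ ℤ φ).toRingEquiv

/-- `J i j` is a Fox derivative `∂(φ eᵢ)/∂eⱼ`. -/
def IsFoxJacobian (φ : MulAut Z2) (J : Matrix (Fin 2) (Fin 2) (MonoidAlgebra ℤ Z2)) : Prop :=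
  ∀ i, augGen φ i = J i 0 * augGen 1 0 + J i 1 * augGen 1 1

lemma exists_isFoxJacobian (φ : MulAut Z2) : ∃ J, IsFoxJacobian φ J := by
  have h : ∀ i, ∃ p q, p * augGen 1 0 + q * augGen 1 1 = augGen φ i := fun i => by
    have := mem_span_of_augmentation_eq_zero (closure_pair_stdGen 1) (augmentation_augGen φ i)
    rw [Set.image_pair] at this
    exact Ideal.mem_span_pair.mp this
  choose p q hpq using h
  exact ⟨Matrix.of ![![p 0, q 0], ![p 1, q 1]], fun i => by fin_cases i <;> simp [hpq]⟩

end Lattice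

section Coefficients

variable {N : Type} [Group N] (ψ : Multiplicative ℤ →* MulAut N)

local notation "Γ" => N ⋊[ψ] Multiplicative ℤ

noncomputable def incl : MonoidAlgebra ℤ N →+* MonoidAlgebra ℤ Γ := mapDomainRingHom ℤ inl

noncomputable def tpow (k : ℤ) : MonoidAlgebra ℤ Γ := of ℤ Γ (inr (Multiplicative.ofAdd k))

lemma incl_of (n : N) : incl ψ (of ℤ N n) = of ℤ Γ (inl n) := by
  simp [incl, of_apply]

lemma augmentation_incl (s : MonoidAlgebra ℤ N) :
    augmentation Γ (incl ψ s) = augmentation N s :=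
  augmentation_mapDomainRingHom _ s

lemma tpow_one_mul_incl_of (n : N) :
    tpow ψ 1 * incl ψ (of ℤ N n) = incl ψ (of ℤ N (ψ (Multiplicative.ofAdd 1) n)) * tpow ψ 1 := by
  rw [incl_of, incl_of, tpow, ← map_mul, ← map_mul, inl_aut]
  simp [mul_assoc]

lemma inr_mul_inl_injective (k : ℤ) :
    Function.Injective fun n : N => (inr (Multiplicative.ofAdd k) * inl n : Γ) :=
  fun _ _ h => inl_injective (mul_left_cancel h)

/-- The coefficient of `tᵏ` in the decomposition `ℤ[Γ] = ⨁ₖ tᵏ ℤ[N]`. -/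
noncomputable def coeffAt (k : ℤ) : MonoidAlgebra ℤ Γ →+ MonoidAlgebra ℤ N :=
  comapDomainAddMonoidHom _ (inr_mul_inl_injective ψ k)

variable {ψ}

@[simp]
lemma coeff_coeffAt (k : ℤ) (r : MonoidAlgebra ℤ Γ) (n : N) :
    (coeffAt ψ k r).coeff n = r.coeff (inr (Multiplicative.ofAdd k) * inl n) := by
  simp [coeffAt, comapDomainAddMonoidHom, coeff_comapDomain]

lemma inr_mul_inl_left_right (g : Γ) :
    inr g.right * inl ((ψ g.right).symm g.left) = g := by
  ext <;> simp

lemma ext_coeffAt {r r' : MonoidAlgebra ℤ Γ} (h : ∀ k, coeffAt ψ k r = coeffAt ψ k r') :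
    r = r' := by
  ext g
  have := congrArg (fun s => s.coeff ((ψ g.right).symm g.left)) (h (Multiplicative.toAdd g.right))
  simpa only [coeff_coeffAt, ofAdd_toAdd, inr_mul_inl_left_right] using this

noncomputable def degrees (r : MonoidAlgebra ℤ Γ) : Finset ℤ :=
  r.coeff.support.image fun g => Multiplicative.toAdd g.right

lemma mem_degrees {r : MonoidAlgebra ℤ Γ} {k : ℤ} : k ∈ degrees r ↔ coeffAt ψ k r ≠ 0 := by
  constructor
  · rintro hk h0
    obtain ⟨g, hg, rfl⟩ := Finset.mem_image.mp hk
    have := congrArg (fun s => s.coeff ((ψ g.right).symm g.left)) h0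
    simp only [coeff_coeffAt, ofAdd_toAdd, inr_mul_inl_left_right] at this
    exact Finsupp.mem_support_iff.mp hg this
  · intro hk
    obtain ⟨n, hn⟩ : ∃ n, (coeffAt ψ k r).coeff n ≠ 0 := by
      by_contra! h
      exact hk (by ext n; simp [h n])
    rw [coeff_coeffAt] at hn
    exact Finset.mem_image.mpr ⟨_, Finsupp.mem_support_iff.mpr hn, by simp⟩

lemma coeffAt_mul_incl (k : ℤ) (r : MonoidAlgebra ℤ Γ) (s : MonoidAlgebra ℤ N) :
    coeffAt ψ k (r * incl ψ s) = coeffAt ψ k r * s := by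
  induction s using MonoidAlgebra.induction_linear with
  | zero => simp
  | add s s' hs hs' => simp only [map_add, mul_add, hs, hs']
  | single m z =>
    ext n
    simp [incl, mul_assoc]

lemma coeffAt_tpow (j k : ℤ) : coeffAt ψ j (tpow ψ k) = if j = k then 1 else 0 := by
  classical
  ext n
  split_ifs with h
  · subst h
    simp only [tpow, of_apply, one_def, coeff_coeffAt, coeff_single]
    rw [Finsupp.single_apply, Finsupp.single_apply]
    simp [eq_comm (a := (1 : N)), map_eq_one_iff (inl : N →* Γ) inl_injective]
  · simp [tpow, of_apply, SemidirectProduct.ext_iff, Ne.symm h]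

lemma coeffAt_add_one_mul_tpow_one (k : ℤ) (r : MonoidAlgebra ℤ Γ) :
    coeffAt ψ (k + 1) (r * tpow ψ 1) =
      domCongr ℤ ℤ (ψ (Multiplicative.ofAdd 1))⁻¹ (coeffAt ψ k r) := by
  ext n
  simp only [tpow, of_apply, coeff_coeffAt, coeff_mul_single_apply, mul_one, coeff_domCongr]
  congr 1
  ext <;> simp

lemma exists_eq_mul_incl {r : MonoidAlgebra ℤ Γ} {c : MonoidAlgebra ℤ N}
    (h : ∀ k, ∃ w, coeffAt ψ k r = w * c) : ∃ W, r = W * incl ψ c := by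
  classical
  choose w hw using h
  refine ⟨∑ k ∈ degrees r, tpow ψ k * incl ψ (w k), ext_coeffAt fun j => ?_⟩
  have hsum : coeffAt ψ j ((∑ k ∈ degrees r, tpow ψ k * incl ψ (w k)) * incl ψ c) =
      if j ∈ degrees r then w j * c else 0 := by
    simp only [Finset.sum_mul, map_sum, mul_assoc, ← map_mul, coeffAt_mul_incl, coeffAt_tpow,
      ite_mul, one_mul, zero_mul, Finset.sum_ite_eq]
  rw [hsum]
  split_ifs with hj
  · exact hw j
  · exact not_not.mp (mem_degrees.not.mp hj)

lemma eq_zero_of_mul_incl_eq_zero [NoZeroDivisors (MonoidAlgebra ℤ N)] {s : MonoidAlgebra ℤ N}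
    (hs : s ≠ 0) {u : MonoidAlgebra ℤ Γ} (h : u * incl ψ s = 0) : u = 0 :=
  ext_coeffAt fun k => by
    have := congrArg (coeffAt ψ k) h
    rw [coeffAt_mul_incl, map_zero] at this
    rw [map_zero]
    exact (mul_eq_zero.mp this).resolve_right hs

/-- Comparing the top `t`-degree of `u` on both sides of `u * incl s = u * t`. -/
lemma eq_zero_of_mul_incl_sub_tpow_one_eq_zero {s : MonoidAlgebra ℤ N} {u : MonoidAlgebra ℤ Γ}
    (h : u * (incl ψ s - tpow ψ 1) = 0) : u = 0 := by
  by_contra hu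
  have hne : (degrees u).Nonempty := by
    by_contra hempty
    refine hu (ext_coeffAt fun k => ?_)
    rw [map_zero]
    by_contra hk
    exact hempty ⟨k, mem_degrees.mpr hk⟩
  set k₀ := (degrees u).max' hne
  have htop : coeffAt ψ (k₀ + 1) u = 0 := by
    by_contra hk
    exact absurd ((degrees u).le_max' _ (mem_degrees.mpr hk)) (by omega)
  have := congrArg (coeffAt ψ (k₀ + 1)) h
  rw [mul_sub, map_sub, map_zero, coeffAt_mul_incl, coeffAt_add_one_mul_tpow_one, htop, zero_mul,
    zero_sub, neg_eq_zero, map_eq_zero_iff _ (AlgEquiv.injective _)] at this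
  exact mem_degrees.mp ((degrees u).max'_mem hne) this

lemma mem_span_of_rightHom_eq_zero {U : Set N} (hU : Subgroup.closure U = ⊤)
    {r : MonoidAlgebra ℤ Γ} (hr : mapDomainRingHom ℤ rightHom r = 0) :
    r ∈ Ideal.span ((fun u => incl ψ (of ℤ N u - 1)) '' U) := by
  have hker : Subgroup.closure (inl '' U) = (rightHom : Γ →* _).ker := by
    rw [← MonoidHom.map_closure, hU, ← MonoidHom.range_eq_map, range_inl_eq_ker_rightHom]
  simpa only [Set.image_image, map_sub, map_one, incl_of] using
    mem_span_of_mapDomainRingHom_eq_zero rightHom_surjective hker hr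

lemma closure_ofAdd_one : Subgroup.closure {Multiplicative.ofAdd (1 : ℤ)} = ⊤ := by
  refine eq_top_iff.mpr fun v _ => ?_
  have : v = Multiplicative.ofAdd 1 ^ Multiplicative.toAdd v := by
    rw [← ofAdd_zsmul, smul_eq_mul, mul_one, ofAdd_toAdd]
  rw [this]
  exact zpow_mem (Subgroup.subset_closure (Set.mem_singleton _)) _

lemma rightHom_incl_of (n : N) : mapDomainRingHom ℤ rightHom (incl ψ (of ℤ N n)) = 1 := by
  rw [incl_of]
  simp [of_apply, one_def]

lemma rightHom_tpow (k : ℤ) :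
    mapDomainRingHom ℤ rightHom (tpow ψ k) = of ℤ _ (Multiplicative.ofAdd k) := by
  simp [tpow, of_apply]

lemma mapDomainRingHom_rightHom_comp_inr :
    (mapDomainRingHom ℤ rightHom).comp (mapDomainRingHom ℤ (inr : _ →* Γ)) = RingHom.id _ := by
  rw [← mapDomainRingHom_comp, SemidirectProduct.rightHom_comp_inr, mapDomainRingHom_id]

end Coefficients

section KoszulLift

variable {N : Type} [CommGroup N] [NoZeroDivisors (MonoidAlgebra ℤ N)]
  {ψ : Multiplicative ℤ →* MulAut N}

lemma HasKoszulSyzygies.lift {c d : MonoidAlgebra ℤ N} (hcd : HasKoszulSyzygies c d)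
    (hd : d ≠ 0) {a b : MonoidAlgebra ℤ (N ⋊[ψ] Multiplicative ℤ)}
    (h : a * incl ψ c + b * incl ψ d = 0) : ∃ W, a = W * incl ψ d ∧ b = -(W * incl ψ c) := by
  obtain ⟨W, rfl⟩ := exists_eq_mul_incl (r := a) (c := d) fun k => by
    have hk := congrArg (coeffAt ψ k) h
    rw [map_add, coeffAt_mul_incl, coeffAt_mul_incl, map_zero] at hk
    obtain ⟨w, hw, -⟩ := hcd _ _ hk
    exact ⟨w, hw⟩
  refine ⟨W, rfl, eq_neg_of_add_eq_zero_left (eq_zero_of_mul_incl_eq_zero hd ?_)⟩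
  have hcomm : incl ψ c * incl ψ d = incl ψ d * incl ψ c := by
    rw [← map_mul, ← map_mul, mul_comm]
  calc (b + W * incl ψ c) * incl ψ d = W * (incl ψ c * incl ψ d) + b * incl ψ d := by
        noncomm_ring
    _ = 0 := by rw [hcomm, ← mul_assoc, h]

end KoszulLift

section Resolution

open Matrix

variable (ψ : Multiplicative ℤ →* MulAut Z2) (J : Matrix (Fin 2) (Fin 2) (MonoidAlgebra ℤ Z2))

local notation "R" => MonoidAlgebra ℤ (Z2 ⋊[ψ] Multiplicative ℤ)
local notation "σ" => ψ (Multiplicative.ofAdd 1)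

lemma tpow_one_mul_incl_augGen (i : Fin 2) :
    tpow ψ 1 * incl ψ (augGen 1 i) = incl ψ (augGen σ i) * tpow ψ 1 := by
  simp only [augGen, map_sub, map_one, mul_sub, sub_mul, mul_one, one_mul, MulAut.one_apply,
    tpow_one_mul_incl_of]

noncomputable def augVec : Fin 3 → R :=
  ![incl ψ (augGen 1 0), incl ψ (augGen 1 1), tpow ψ 1 - 1]

noncomputable def foxMatrix : Matrix (Fin 3) (Fin 3) R :=
  !![incl ψ (augGen 1 1), -incl ψ (augGen 1 0), 0;
    tpow ψ 1 - incl ψ (J 0 0), -incl ψ (J 0 1), -incl ψ (augGen σ 0);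
    -incl ψ (J 1 0), tpow ψ 1 - incl ψ (J 1 1), -incl ψ (augGen σ 1)]

noncomputable def syzygyVec : Fin 3 → R :=
  ![incl ψ J.det - tpow ψ 1, incl ψ (augGen σ 1), -incl ψ (augGen σ 0)]

variable {ψ J}

lemma foxMatrix_mulVec_augVec (hJ : IsFoxJacobian σ J) :
    foxMatrix ψ J *ᵥ augVec ψ = 0 := by
  have hfox (i : Fin 2) := congrArg (incl ψ) (hJ i)
  simp only [map_add, map_mul] at hfox
  funext i
  fin_cases i <;> simp [foxMatrix, augVec, Matrix.mulVec, dotProduct, Fin.sum_univ_three]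
  · rw [← map_mul, ← map_mul, mul_comm, add_neg_cancel]
  · calc _ = (tpow ψ 1 * incl ψ (augGen 1 0) - incl ψ (augGen σ 0) * tpow ψ 1)
          + (incl ψ (augGen σ 0) - (incl ψ (J 0 0) * incl ψ (augGen 1 0)
            + incl ψ (J 0 1) * incl ψ (augGen 1 1))) := by noncomm_ring
      _ = 0 := by rw [tpow_one_mul_incl_augGen, ← hfox, sub_self, sub_self, add_zero]
  · calc _ = (tpow ψ 1 * incl ψ (augGen 1 1) - incl ψ (augGen σ 1) * tpow ψ 1)
          + (incl ψ (augGen σ 1) - (incl ψ (J 1 0) * incl ψ (augGen 1 0)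
            + incl ψ (J 1 1) * incl ψ (augGen 1 1))) := by noncomm_ring
      _ = 0 := by rw [tpow_one_mul_incl_augGen, ← hfox, sub_self, sub_self, add_zero]

lemma syzygyVec_vecMul_foxMatrix (hJ : IsFoxJacobian σ J) :
    syzygyVec ψ J ᵥ* foxMatrix ψ J = 0 := by
  have hS₀ : J.det * augGen 1 1 - augGen σ 1 * J 0 0 + augGen σ 0 * J 1 0 = 0 := by
    rw [det_fin_two, hJ 0, hJ 1]; ring
  have hS₁ : -(J.det * augGen 1 0) - augGen σ 1 * J 0 1 + augGen σ 0 * J 1 1 = 0 := by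
    rw [det_fin_two, hJ 0, hJ 1]; ring
  funext j
  fin_cases j <;> simp [foxMatrix, syzygyVec, Matrix.vecMul, dotProduct, Fin.sum_univ_three]
  · calc _ = (incl ψ (augGen σ 1) * tpow ψ 1 - tpow ψ 1 * incl ψ (augGen 1 1))
          + incl ψ (J.det * augGen 1 1 - augGen σ 1 * J 0 0 + augGen σ 0 * J 1 0) := by
          simp only [map_add, map_sub, map_mul]; noncomm_ring
      _ = 0 := by rw [tpow_one_mul_incl_augGen, hS₀, map_zero, sub_self, add_zero]
  · calc _ = (tpow ψ 1 * incl ψ (augGen 1 0) - incl ψ (augGen σ 0) * tpow ψ 1)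
          + incl ψ (-(J.det * augGen 1 0) - augGen σ 1 * J 0 1 + augGen σ 0 * J 1 1) := by
          simp only [map_add, map_sub, map_mul, map_neg]; noncomm_ring
      _ = 0 := by rw [tpow_one_mul_incl_augGen, hS₁, map_zero, sub_self, add_zero]
  · rw [← map_mul, ← map_mul, mul_comm, neg_add_cancel]

variable (ψ J)

noncomputable def d₁ : (Fin 3 → R) →ₗ[R] R := Fintype.linearCombination R (augVec ψ)

noncomputable def d₂ : (Fin 3 → R) →ₗ[R] Fin 3 → R := toLinearMapRight' (foxMatrix ψ J)

noncomputable def d₃ : R →ₗ[R] Fin 3 → R := LinearMap.toSpanSingleton R _ (syzygyVec ψ J)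

variable {ψ J}

lemma d₁_apply (v : Fin 3 → R) : d₁ ψ v = v ⬝ᵥ augVec ψ := by
  simp [d₁, Fintype.linearCombination_apply, dotProduct]

lemma d₂_apply (v : Fin 3 → R) : d₂ ψ J v = v ᵥ* foxMatrix ψ J := toLinearMapRight'_apply _ _

lemma d₃_apply (r : R) : d₃ ψ J r = r • syzygyVec ψ J := rfl

lemma d₁_comp_d₂ (hJ : IsFoxJacobian σ J) :
    d₁ ψ ∘ₗ d₂ ψ J = 0 := by
  refine LinearMap.ext fun v => ?_
  simp only [LinearMap.comp_apply, d₁_apply, d₂_apply, ← dotProduct_mulVec,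
    foxMatrix_mulVec_augVec hJ, dotProduct_zero, LinearMap.zero_apply]

lemma d₂_comp_d₃ (hJ : IsFoxJacobian σ J) :
    d₂ ψ J ∘ₗ d₃ ψ J = 0 := by
  refine LinearMap.ext fun r => ?_
  simp only [LinearMap.comp_apply, d₃_apply, d₂_apply, smul_vecMul,
    syzygyVec_vecMul_foxMatrix hJ, smul_zero, LinearMap.zero_apply]

lemma d₃_injective : Function.Injective (d₃ ψ J) := by
  refine (injective_iff_map_eq_zero _).mpr fun r hr =>
    eq_zero_of_mul_incl_sub_tpow_one_eq_zero (s := J.det) ?_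
  simpa [d₃_apply, syzygyVec] using congrFun hr 0

lemma range_d₃_eq_ker_d₂ (hJ : IsFoxJacobian σ J) :
    LinearMap.range (d₃ ψ J) = LinearMap.ker (d₂ ψ J) := by
  refine le_antisymm (LinearMap.range_le_ker_iff.mpr (d₂_comp_d₃ hJ)) fun v hv => ?_
  rw [LinearMap.mem_ker, d₂_apply] at hv
  have h₂ : -v 1 * incl ψ (augGen σ 0) + -v 2 * incl ψ (augGen σ 1) = 0 := by
    simpa [foxMatrix, vecMul, dotProduct, Fin.sum_univ_three] using congrFun hv 2
  obtain ⟨W, hW₁, hW₂⟩ := (hasKoszulSyzygies σ).lift (augGen_ne_zero σ 1) h₂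
  set u := v - d₃ ψ J (-W) with hu
  have hu₁ : u 1 = 0 := by
    change v 1 - -W * incl ψ (augGen σ 1) = 0
    rw [neg_eq_iff_eq_neg.mp hW₁]; noncomm_ring
  have hu₂ : u 2 = 0 := by
    change v 2 - -W * -incl ψ (augGen σ 0) = 0
    rw [neg_inj.mp hW₂]; noncomm_ring
  have hu₀ : u 0 = 0 := by
    have hdu : d₂ ψ J u = 0 := by
      rw [hu, map_sub, d₂_apply v, hv, ← LinearMap.comp_apply, d₂_comp_d₃ hJ,
        LinearMap.zero_apply, sub_zero]
    refine eq_zero_of_mul_incl_eq_zero (augGen_ne_zero 1 1) ?_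
    simpa [d₂_apply, foxMatrix, vecMul, dotProduct, Fin.sum_univ_three, hu₁, hu₂] using
      congrFun hdu 0
  refine ⟨-W, (sub_eq_zero.mp (funext fun i => ?_)).symm⟩
  fin_cases i <;> assumption

lemma rightHom_incl_augGen (φ : MulAut Z2) (i : Fin 2) :
    mapDomainRingHom ℤ rightHom (incl ψ (augGen φ i)) = 0 := by
  rw [augGen, map_sub, map_sub, rightHom_incl_of, map_one, map_one, sub_self]

lemma range_d₂_eq_ker_d₁ (hJ : IsFoxJacobian σ J) :
    LinearMap.range (d₂ ψ J) = LinearMap.ker (d₁ ψ) := by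
  refine le_antisymm (LinearMap.range_le_ker_iff.mpr (d₁_comp_d₂ hJ)) fun v hv => ?_
  have hρ : mapDomainRingHom ℤ rightHom (v 2) = 0 := by
    have := congrArg (mapDomainRingHom ℤ rightHom) (LinearMap.mem_ker.mp hv)
    simp only [d₁_apply, dotProduct, Fin.sum_univ_three, augVec, cons_val_zero, cons_val_one,
      cons_val_two, head_cons, tail_cons, map_add, map_mul, map_sub, map_one, map_zero,
      rightHom_incl_augGen, rightHom_tpow, mul_zero, zero_add] at this
    exact (mul_eq_zero.mp this).resolve_right (of_sub_one_ne_zero (by simp))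
  obtain ⟨C₁, C₂, hC⟩ : ∃ C₁ C₂, C₁ * incl ψ (augGen σ 0) + C₂ * incl ψ (augGen σ 1) = v 2 := by
    have := mem_span_of_rightHom_eq_zero (closure_pair_stdGen σ) hρ
    rw [Set.image_pair] at this
    exact Ideal.mem_span_pair.mp this
  set u := v - d₂ ψ J ![0, -C₁, -C₂] with hu
  have hu₂ : u 2 = 0 := by
    rw [hu, Pi.sub_apply, sub_eq_zero, ← hC, d₂_apply]
    simp [vecMul, dotProduct, Fin.sum_univ_three, foxMatrix]
  have hdu : d₁ ψ u = 0 := by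
    rw [hu, map_sub, LinearMap.mem_ker.mp hv, ← LinearMap.comp_apply, d₁_comp_d₂ hJ,
      LinearMap.zero_apply, sub_zero]
  have hu₀₁ : u 0 * incl ψ (augGen 1 0) + u 1 * incl ψ (augGen 1 1) = 0 := by
    simpa [d₁_apply, dotProduct, Fin.sum_univ_three, augVec, hu₂] using hdu
  obtain ⟨W, hW₀, hW₁⟩ := (hasKoszulSyzygies 1).lift (augGen_ne_zero 1 1) hu₀₁
  refine ⟨![0, -C₁, -C₂] + ![W, 0, 0], ?_⟩
  rw [map_add, add_comm, ← eq_sub_iff_add_eq, ← hu]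
  funext i
  fin_cases i
  · simp [d₂_apply, vecMul, dotProduct, Fin.sum_univ_three, foxMatrix, hW₀]
  · simp [d₂_apply, vecMul, dotProduct, Fin.sum_univ_three, foxMatrix, hW₁]
  · simp [d₂_apply, vecMul, dotProduct, Fin.sum_univ_three, foxMatrix, hu₂]

lemma range_d₁_eq_ker_augmentation :
    LinearMap.range (d₁ ψ) = RingHom.ker (augmentation (Z2 ⋊[ψ] Multiplicative ℤ)) := by
  refine le_antisymm ?_ fun r hr => ?_
  · rintro _ ⟨v, rfl⟩
    simp [RingHom.mem_ker, d₁_apply, dotProduct, Fin.sum_univ_three, augVec, augmentation_incl,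
      augmentation_augGen, tpow]
  obtain ⟨c, hc⟩ :
      ∃ c, c * (of ℤ _ (Multiplicative.ofAdd 1) - 1) = mapDomainRingHom ℤ rightHom r := by
    have := mem_span_of_augmentation_eq_zero closure_ofAdd_one
      (r := mapDomainRingHom ℤ rightHom r) (by rwa [augmentation_mapDomainRingHom])
    rw [Set.image_singleton] at this
    exact Ideal.mem_span_singleton'.mp this
  set c' := mapDomainRingHom ℤ (inr : _ →* Z2 ⋊[ψ] Multiplicative ℤ) c
  have hρ : mapDomainRingHom ℤ rightHom (r - c' * (tpow ψ 1 - 1)) = 0 := by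
    rw [map_sub, map_mul, map_sub, map_one, rightHom_tpow, ← RingHom.comp_apply,
      mapDomainRingHom_rightHom_comp_inr, RingHom.id_apply, hc, sub_self]
  obtain ⟨P, Q, hPQ⟩ : ∃ P Q, P * incl ψ (augGen 1 0) + Q * incl ψ (augGen 1 1) =
      r - c' * (tpow ψ 1 - 1) := by
    have := mem_span_of_rightHom_eq_zero (closure_pair_stdGen 1) hρ
    rw [Set.image_pair] at this
    exact Ideal.mem_span_pair.mp this
  refine ⟨![P, Q, c'], ?_⟩
  simp only [d₁_apply, dotProduct, Fin.sum_univ_three, augVec, cons_val_zero, cons_val_one,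
    cons_val_two, head_cons, tail_cons]
  rw [hPQ, sub_add_cancel]

end Resolution

end TorusBundle

/-- The trivial module `ℤ` admits a free resolution
`0 → ℤ[G] → ℤ[G]³ → ℤ[G]³ → ℤ[G] → ℤ → 0` over `ℤ[G]`, whose final map is the
augmentation map. -/
theorem torusBundle_free_resolution (θ : GL (Fin 2) ℤ) :
    ∃ (d₃ : MonoidAlgebra ℤ (TorusBundleGroup θ) →ₗ[MonoidAlgebra ℤ (TorusBundleGroup θ)]
        (Fin 3 → MonoidAlgebra ℤ (TorusBundleGroup θ)))
      (d₂ : (Fin 3 → MonoidAlgebra ℤ (TorusBundleGroup θ))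
        →ₗ[MonoidAlgebra ℤ (TorusBundleGroup θ)]
        (Fin 3 → MonoidAlgebra ℤ (TorusBundleGroup θ)))
      (d₁ : (Fin 3 → MonoidAlgebra ℤ (TorusBundleGroup θ))
        →ₗ[MonoidAlgebra ℤ (TorusBundleGroup θ)]
        MonoidAlgebra ℤ (TorusBundleGroup θ)),
      Function.Injective d₃ ∧
      LinearMap.range d₃ = LinearMap.ker d₂ ∧
      LinearMap.range d₂ = LinearMap.ker d₁ ∧
      LinearMap.range d₁ = RingHom.ker (augmentation (TorusBundleGroup θ)) ∧
      Function.Surjective (augmentation (TorusBundleGroup θ)) := by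
  obtain ⟨J, hJ⟩ := TorusBundle.exists_isFoxJacobian (torusAction θ (Multiplicative.ofAdd 1))
  open TorusBundle in
  exact ⟨d₃ (torusAction θ) J, d₂ (torusAction θ) J, d₁ (torusAction θ), d₃_injective,
    range_d₃_eq_ker_d₂ hJ, range_d₂_eq_ker_d₁ hJ, range_d₁_eq_ker_augmentation,
    augmentation_surjective⟩
end

section
/- H¹(G, 𝔽₂) ≅ (𝔽₂)^{3 − r₂}, where r₂ is the rank over the field 𝔽₂ of the reduction modulo 2 of the integer matrix θ − I. -/
namespace SemidirectProduct

variable {N G : Type*} [Group N] [Group G]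

def invariantAddHoms (φ : G →* MulAut N) (A : Type*) [AddCommGroup A] :
    AddSubgroup (Additive N →+ A) where
  carrier := {f | ∀ g x, f (.ofMul (φ g x)) = f (.ofMul x)}
  add_mem' hf hf' g x := by simp only [AddMonoidHom.add_apply, hf g x, hf' g x]
  zero_mem' _ _ := rfl
  neg_mem' hf g x := by simp only [AddMonoidHom.neg_apply, hf g x]

variable {A : Type*} [AddCommGroup A]

theorem mem_invariantAddHoms_zpowersHom {e : MulAut N} {f : Additive N →+ A} :
    f ∈ invariantAddHoms (zpowersHom _ e) A ↔ ∀ x, f (.ofMul (e x)) = f (.ofMul x) := by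
  refine ⟨fun hf x => by simpa using hf (.ofAdd 1) x, fun hf g => ?_⟩
  have hf_inv x : f (.ofMul (e⁻¹ x)) = f (.ofMul x) := by
    simpa using (hf (e⁻¹ x)).symm
  rw [zpowersHom_apply]
  induction g.toAdd using Int.induction_on with
  | zero => simp
  | succ n ih => intro x; rw [zpow_add_one, MulAut.mul_apply, ih, hf]
  | pred n ih => intro x; rw [zpow_sub_one, MulAut.mul_apply, ih, hf_inv]

variable {φ : G →* MulAut N}

theorem addHom_inl_aut (F : Additive (N ⋊[φ] G) →+ A) (g : G) (x : N) :
    F (.ofMul (inl (φ g x))) = F (.ofMul (inl x)) := by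
  rw [inl_aut, map_inv, ofMul_mul, ofMul_mul, ofMul_inv, map_add, map_add, map_neg]
  abel

def addHomEquiv : (Additive (N ⋊[φ] G) →+ A) ≃+ invariantAddHoms φ A × (Additive G →+ A) where
  toFun F := (⟨F.comp (MonoidHom.toAdditive inl), addHom_inl_aut F⟩,
    F.comp (MonoidHom.toAdditive inr))
  invFun p := MonoidHom.toAdditiveLeft <|
    lift p.1.1.toMultiplicativeRight p.2.toMultiplicativeRight fun g => by
      ext x
      simp [p.1.2 g x]
  left_inv F := by
    apply AddMonoidHom.toMultiplicativeRight.injective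
    refine hom_ext ?_ ?_ <;> ext <;> simp
  right_inv p := by ext <;> simp
  map_add' _ _ := rfl

end SemidirectProduct

namespace AddMonoidHom

noncomputable def piIntEquiv (ι M : Type*) [Finite ι] [AddCommGroup M] :
    ((ι → ℤ) →+ M) ≃+ (ι → M) :=
  (addMonoidHomLequivInt ℤ).toAddEquiv.trans (Module.piEquiv ι ℤ M).symm.toAddEquiv

variable {ι : Type*} [Fintype ι]

theorem piIntEquiv_symm_apply {M : Type*} [AddCommGroup M] (v : ι → M) (x : ι → ℤ) :
    (piIntEquiv ι M).symm v x = ∑ i, x i • v i := by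
  rw [← Module.piEquiv_apply_apply ι ℤ M]
  rfl

open Matrix

variable {R : Type*} [CommRing R]

theorem piIntEquiv_symm_mulVec (v : ι → R) (M : Matrix ι ι ℤ) (x : ι → ℤ) :
    (piIntEquiv ι R).symm v (M *ᵥ x) = (fun i => (x i : R)) ⬝ᵥ ((M.map Int.cast)ᵀ *ᵥ v) := by
  rw [piIntEquiv_symm_apply, dotProduct_mulVec, vecMul_transpose]
  refine Finset.sum_congr rfl fun i _ => ?_
  rw [zsmul_eq_mul]
  congr 1
  exact (Int.castRingHom R).map_mulVec M x i

theorem piIntEquiv_symm_mulVec_invariant_iff [DecidableEq ι] (v : ι → R) (T : Matrix ι ι ℤ) :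
    (∀ x, (piIntEquiv ι R).symm v (T *ᵥ x) = (piIntEquiv ι R).symm v x) ↔
      ((T - 1).map (Int.cast : ℤ → R))ᵀ *ᵥ v = 0 := by
  have hsub x : (piIntEquiv ι R).symm v (T *ᵥ x) - (piIntEquiv ι R).symm v x =
      (fun i => (x i : R)) ⬝ᵥ (((T - 1).map Int.cast)ᵀ *ᵥ v) := by
    rw [← piIntEquiv_symm_mulVec, sub_mulVec, one_mulVec, map_sub]
  simp_rw [← sub_eq_zero (a := (piIntEquiv ι R).symm v _), hsub]
  refine ⟨fun h => funext fun i => ?_, fun h x => by rw [h, dotProduct_zero]⟩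
  have hcast : (fun j => ((Pi.single i 1 : ι → ℤ) j : R)) = Pi.single i 1 := by
    ext j
    simp only [Pi.single_apply, Int.cast_ite, Int.cast_one, Int.cast_zero]
  simpa [hcast] using h (Pi.single i 1)

end AddMonoidHom

theorem Matrix.finrank_ker_mulVecLin {m n K : Type*} [Fintype n] [Field K] (A : Matrix m n K) :
    Module.finrank K (LinearMap.ker A.mulVecLin) = Fintype.card n - A.rank := by
  have := LinearMap.finrank_range_add_finrank_ker A.mulVecLin
  rw [Module.finrank_fintype_fun_eq_card] at this
  rw [← this, Matrix.rank, Nat.add_sub_cancel_left]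

section TorusBundle

open SemidirectProduct Matrix

variable (θ : GL (Fin 2) ℤ) (R : Type*) [CommRing R]

noncomputable def torusInvariantsEquivKer :
    invariantAddHoms (torusAction θ) R ≃+
      LinearMap.ker (((θ : Matrix (Fin 2) (Fin 2) ℤ) - 1).map (Int.cast : ℤ → R))ᵀ.mulVecLin :=
  let e := (AddEquiv.addMonoidHomCongrLeft (N := R)
    (AddEquiv.additiveMultiplicative (Fin 2 → ℤ))).trans (AddMonoidHom.piIntEquiv (Fin 2) R)
  (e.addSubgroupMap _).trans <|
    AddEquiv.addSubgroupCongr (K := (LinearMap.ker _).toAddSubgroup) <| by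
      ext v
      refine AddSubgroup.mem_map_equiv.trans ?_
      rw [Submodule.mem_toAddSubgroup, LinearMap.mem_ker, mulVecLin_apply,
        ← AddMonoidHom.piIntEquiv_symm_mulVec_invariant_iff]
      exact mem_invariantAddHoms_zpowersHom

end TorusBundle

/-- `H¹(G, 𝔽₂) ≅ 𝔽₂^(3 - r₂)`, where `r₂` is the rank of `θ - I` reduced mod `2`. -/
theorem torusBundle_H1_mod2 (θ : GL (Fin 2) ℤ) (r₂ : ℕ)
    (hr : (((θ : Matrix (Fin 2) (Fin 2) ℤ) - 1).map (Int.cast : ℤ → ZMod 2)).rank = r₂) :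
    Nonempty ((groupCohomology (Rep.trivial (ZMod 2) (TorusBundleGroup θ) (ZMod 2)) 1) ≃+
      (Fin (3 - r₂) → ZMod 2)) := by
  set A := ((θ : Matrix (Fin 2) (Fin 2) ℤ) - 1).map (Int.cast : ℤ → ZMod 2)
  have hdim : Module.finrank (ZMod 2) (LinearMap.ker A.transpose.mulVecLin × ZMod 2) =
      Module.finrank (ZMod 2) (Fin (3 - r₂) → ZMod 2) := by
    have hle : A.rank ≤ 2 := by simpa using A.rank_le_card_width
    rw [Module.finrank_prod, A.transpose.finrank_ker_mulVecLin, Matrix.rank_transpose,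
      Module.finrank_self, Module.finrank_fin_fun, Fintype.card_fin]
    omega
  exact ⟨(groupCohomology.H1IsoOfIsTrivial _).toLinearEquiv.toAddEquiv.trans <|
    SemidirectProduct.addHomEquiv.trans <|
    ((torusInvariantsEquivKer θ (ZMod 2)).prodCongr (zmultiplesAddHom _).symm).trans
      (LinearEquiv.ofFinrankEq _ _ hdim).toAddEquiv⟩
end

section
/- Let p be an odd prime. Then H¹(G, 𝔽_p) ≅ (𝔽_p)^{3 − r_p}, where r_p is the rank over the field 𝔽_p of the reduction modulo p of the integer matrix θ − I. -/
/-!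
A homomorphism from `ℤ² ⋊_θ ℤ` to the abelian group `𝔽_p` is a pair: a homomorphism on `ℤ²`
invariant under `θ`, and an arbitrary one on `ℤ`. The former are given by the vectors
`w ∈ 𝔽_p²` with `w (θ - 1) = 0`, a space of dimension `2 - r_p`; hence
`H¹(G, 𝔽_p) = Hom(G, 𝔽_p)` has `p ^ (3 - r_p)` elements, and a finite `𝔽_p`-vector space is
determined up to isomorphism by its cardinality.
-/

namespace SemidirectProduct

variable {N G A : Type*} [Group N] [Group G] [CommGroup A] {φ : G →* MulAut N}

/-- Into an abelian group, conjugation is trivial, so `lift` only needs the hom on `N` to be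
`φ`-invariant. -/
def monoidHomEquivOfCommGroup :
    (N ⋊[φ] G →* A) ≃ {f : N →* A // ∀ g, f.comp (φ g).toMonoidHom = f} × (G →* A) where
  toFun F := (⟨F.comp inl, fun g => by ext n; simp [inl_aut]⟩, F.comp inr)
  invFun fg := lift fg.1.1 fg.2 fun g => by ext n; simpa using DFunLike.congr_fun (fg.1.2 g) n
  left_inv F := (lift_unique F).symm
  right_inv fg := by ext <;> simp

end SemidirectProduct

theorem MonoidHom.comp_zpowersHom_eq_self_iff {N A : Type*} [Group N] [Monoid A]
    (f : N →* A) (σ : MulAut N) :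
    (∀ k, f.comp (zpowersHom _ σ k).toMonoidHom = f) ↔ f.comp σ.toMonoidHom = f := by
  refine ⟨fun h => by simpa using h (.ofAdd 1), fun h k => ?_⟩
  have hσ (n : N) : f (σ n) = f n := DFunLike.congr_fun h n
  ext n
  simp only [zpowersHom_apply, MonoidHom.coe_comp, MulEquiv.coe_toMonoidHom, Function.comp_apply]
  induction k.toAdd using Int.induction_on generalizing n with
  | zero => simp
  | succ k ih => rw [zpow_add_one, MulAut.mul_apply, ih, hσ]
  | pred k ih => rw [zpow_sub_one, MulAut.mul_apply, ih, ← hσ, MulAut.apply_inv_self]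

namespace Matrix

variable {ι R : Type*} [Fintype ι] [CommRing R]

def intDotProductHom (w : ι → R) : (ι → ℤ) →+ R where
  toFun v := (Int.cast ∘ v) ⬝ᵥ w
  map_zero' := by simp
  map_add' v v' := by
    simp only [Function.comp_def, Pi.add_apply, Int.cast_add]
    exact add_dotProduct _ _ w

theorem intDotProductHom_mulVec (w : ι → R) (T : Matrix ι ι ℤ) (v : ι → ℤ) :
    intDotProductHom w (T *ᵥ v) = intDotProductHom (w ᵥ* T.map Int.cast) v := by
  have hcast : Int.cast ∘ (T *ᵥ v) = T.map (Int.cast : ℤ → R) *ᵥ (Int.cast ∘ v) :=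
    funext fun i => (Int.castRingHom R).map_mulVec T v i
  simp only [intDotProductHom, AddMonoidHom.coe_mk, ZeroHom.coe_mk, hcast, dotProduct_comm _ w,
    dotProduct_mulVec]
  exact dotProduct_comm _ _

variable [DecidableEq ι]

theorem intDotProductHom_single (w : ι → R) (i : ι) :
    intDotProductHom w (Pi.single i 1) = w i := by
  have : (Int.cast ∘ Pi.single i (1 : ℤ) : ι → R) = Pi.single i 1 := by
    ext j; by_cases j = i <;> simp [*]
  simp [intDotProductHom, this]

def addMonoidHomIntEquiv : ((ι → ℤ) →+ R) ≃ (ι → R) where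
  toFun f i := f (Pi.single i 1)
  invFun := intDotProductHom
  left_inv f := by ext i; simp [intDotProductHom_single]
  right_inv w := funext (intDotProductHom_single w)

/-- An additive map `ℤ^ι → R` is given by its values `w` on the standard basis, and it is
`T`-invariant iff `w ᵥ* T = w` over `R`. -/
def invariantAddMonoidHomEquivKer (T : Matrix ι ι ℤ) :
    {f : (ι → ℤ) →+ R // ∀ v, f (T *ᵥ v) = f v} ≃
      LinearMap.ker ((T - 1).map (Int.cast : ℤ → R)).vecMulLinear :=
  (addMonoidHomIntEquiv.symm.subtypeEquiv fun w => by
    change _ ↔ ∀ v, intDotProductHom w (T *ᵥ v) = intDotProductHom w v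
    rw [LinearMap.mem_ker, vecMulLinear_apply, Matrix.map_sub _ Int.cast_sub,
      Matrix.map_one _ Int.cast_zero Int.cast_one, vecMul_sub, vecMul_one, sub_eq_zero]
    simp only [intDotProductHom_mulVec, ← DFunLike.ext_iff]
    exact (addMonoidHomIntEquiv (ι := ι) (R := R)).symm.injective.eq_iff.symm).symm

theorem finrank_ker_vecMulLinear {m n K : Type*} [Fintype m] [Fintype n] [Field K]
    (M : Matrix m n K) :
    Module.finrank K (LinearMap.ker M.vecMulLinear) = Fintype.card m - M.rank := by
  have := LinearMap.finrank_range_add_finrank_ker M.vecMulLinear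
  rw [← rank_transpose, rank, mulVecLin_transpose]
  rw [Module.finrank_fintype_fun_eq_card] at this
  omega

end Matrix

theorem nonempty_linearEquiv_of_natCard_eq {K V W : Type*} [Field K] [Finite K]
    [AddCommGroup V] [Module K V] [Finite V] [AddCommGroup W] [Module K W] [Finite W]
    (h : Nat.card V = Nat.card W) : Nonempty (V ≃ₗ[K] W) := by
  refine FiniteDimensional.nonempty_linearEquiv_of_finrank_eq ?_
  rw [Module.natCard_eq_pow_finrank (K := K) (V := V),
    Module.natCard_eq_pow_finrank (K := K) (V := W)] at h
  exact Nat.pow_right_injective Finite.one_lt_card h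

open Multiplicative
open scoped Matrix

theorem torusAut_apply (θ : GL (Fin 2) ℤ) (m : Multiplicative (Fin 2 → ℤ)) :
    toAdd (torusAut θ m) = (θ : Matrix (Fin 2) (Fin 2) ℤ) *ᵥ toAdd m := by
  simp [torusAut, Matrix.GeneralLinearGroup.toLin]

def torusInvariantHomEquiv (θ : GL (Fin 2) ℤ) (R : Type*) [AddMonoid R] :
    {f : Multiplicative (Fin 2 → ℤ) →* Multiplicative R //
        ∀ k, f.comp (torusAction θ k).toMonoidHom = f} ≃
      {f : (Fin 2 → ℤ) →+ R // ∀ v, f ((θ : Matrix (Fin 2) (Fin 2) ℤ) *ᵥ v) = f v} :=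
  AddMonoidHom.toMultiplicative.symm.subtypeEquiv fun f => by
    rw [torusAction, MonoidHom.comp_zpowersHom_eq_self_iff, DFunLike.ext_iff]
    refine (Multiplicative.toAdd.forall_congr fun v => ?_)
    rw [← torusAut_apply]
    exact toAdd.injective.eq_iff.symm

theorem natCard_addMonoidHom_torusBundleGroup (θ : GL (Fin 2) ℤ) (p : ℕ) [Fact p.Prime] :
    Nat.card (Additive (TorusBundleGroup θ) →+ ZMod p) =
      p ^ (3 - (((θ : Matrix (Fin 2) (Fin 2) ℤ) - 1).map (Int.cast : ℤ → ZMod p)).rank) := by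
  set M := ((θ : Matrix (Fin 2) (Fin 2) ℤ) - 1).map (Int.cast : ℤ → ZMod p)
  have hM : M.rank ≤ 2 := (M.rank_le_width).trans_eq (Fintype.card_fin 2)
  have hker : Nat.card (LinearMap.ker M.vecMulLinear) = p ^ (2 - M.rank) := by
    rw [Module.natCard_eq_pow_finrank (K := ZMod p), Matrix.finrank_ker_vecMulLinear,
      Nat.card_zmod, Fintype.card_fin]
  calc Nat.card (Additive (TorusBundleGroup θ) →+ ZMod p)
      = Nat.card (LinearMap.ker M.vecMulLinear) * Nat.card (Multiplicative (ZMod p)) := by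
        refine (Nat.card_congr (MonoidHom.toAdditiveLeft.symm.trans
          SemidirectProduct.monoidHomEquivOfCommGroup)).trans ?_
        rw [Nat.card_prod, Nat.card_congr ((torusInvariantHomEquiv θ _).trans
          (Matrix.invariantAddMonoidHomEquivKer _)), Nat.card_congr (zpowersHom _).symm]
    _ = p ^ (3 - M.rank) := by
        rw [hker, Nat.card_congr toAdd, Nat.card_zmod, ← pow_succ]
        congr 1
        omega

theorem torusBundle_H1_modp_general (θ : GL (Fin 2) ℤ) (p : ℕ) (hp : p.Prime)
    (r_p : ℕ) (hr : (((θ : Matrix (Fin 2) (Fin 2) ℤ) - 1).map (Int.cast : ℤ → ZMod p)).rank = r_p) :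
    Nonempty ((groupCohomology (Rep.trivial (ZMod p) (TorusBundleGroup θ) (ZMod p)) 1) ≃+
      (Fin (3 - r_p) → ZMod p)) := by
  have : Fact p.Prime := ⟨hp⟩
  have hcard := natCard_addMonoidHom_torusBundleGroup θ p
  rw [hr] at hcard
  have : Finite (Additive (TorusBundleGroup θ) →+ ZMod p) :=
    Nat.finite_of_card_ne_zero (hcard ▸ pow_ne_zero _ hp.ne_zero)
  obtain ⟨e⟩ := nonempty_linearEquiv_of_natCard_eq (K := ZMod p)
    (hcard.trans (by rw [Nat.card_fun, Nat.card_zmod, Nat.card_fin]) :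
      Nat.card (Additive (TorusBundleGroup θ) →+ ZMod p) = Nat.card (Fin (3 - r_p) → ZMod p))
  exact ⟨((groupCohomology.H1IsoOfIsTrivial _).toLinearEquiv.trans e).toAddEquiv⟩

/-- For an odd prime `p`, `H¹(G, 𝔽_p) ≅ 𝔽_p^(3 - r_p)`, where `r_p` is the rank of
`θ - I` reduced mod `p`. -/
theorem torusBundle_H1_modp (θ : GL (Fin 2) ℤ) (p : ℕ) (hp : p.Prime) (hodd : Odd p)
    (r_p : ℕ) (hr : (((θ : Matrix (Fin 2) (Fin 2) ℤ) - 1).map (Int.cast : ℤ → ZMod p)).rank = r_p) :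
    Nonempty ((groupCohomology (Rep.trivial (ZMod p) (TorusBundleGroup θ) (ZMod p)) 1) ≃+
      (Fin (3 - r_p) → ZMod p)) :=
  torusBundle_H1_modp_general θ p hp r_p hr
end

section
/- Let θ = [[α, γ], [β, δ]] ∈ GL(2,ℤ) with det θ = 1, and suppose the integer matrix θ − I has rank 1. Then the cokernel of the map ℤ² → ℤ² given by θ − I is isomorphic to ℤ/gcd(β,γ) ⊕ ℤ. -/
/-!
Since `det θ = 1` and `det (θ - 1) = 0`, the matrix `N = θ - 1` has trace and determinant `0`, so
`N = [[x, γ], [β, -x]]` with `x² = -βγ`; hence `gcd(β, γ)` divides every entry of `N`. A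
determinant-zero integer matrix factors as `v uᵀ` with `v` primitive, so its image is
`gcd(u) ℤ · v`; completing `v` to a basis of `ℤ²` gives cokernel `ℤ/gcd(u) ⊕ ℤ`, and `gcd(u)` is
the gcd of all entries of `N`, which is `gcd(β, γ)`.
-/

open Matrix

namespace Matrix

theorem det_sub_one_fin_two {R : Type*} [CommRing R] (A : Matrix (Fin 2) (Fin 2) R) :
    (A - 1).det = A.det - A.trace + 1 := by
  simp only [det_fin_two, trace_fin_two, sub_apply, one_apply_eq, one_apply_ne', ne_eq,
    zero_ne_one, one_ne_zero, not_false_eq_true]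
  ring

theorem det_eq_zero_of_rank_lt {R : Type*} [CommRing R] [IsDomain R] {n : Type*} [Fintype n]
    [DecidableEq n] {A : Matrix n n R} (h : A.rank < Fintype.card n) : A.det = 0 := by
  by_contra hA
  exact h.ne (rank_of_det_ne_zero hA)

end Matrix

theorem Int.exists_isCoprime_smul_eq (w : Fin 2 → ℤ) :
    ∃ (g : ℤ) (v : Fin 2 → ℤ), IsCoprime (v 0) (v 1) ∧ w = g • v := by
  rcases Nat.eq_zero_or_pos (Int.gcd (w 0) (w 1)) with h | h
  · obtain ⟨h0, h1⟩ := Int.gcd_eq_zero_iff.mp h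
    refine ⟨0, ![1, 0], isCoprime_one_left, ?_⟩
    ext i; fin_cases i <;> simp [h0, h1]
  · obtain ⟨v0, v1, hv, h0, h1⟩ := Int.exists_gcd_one h
    refine ⟨(Int.gcd (w 0) (w 1) : ℤ), ![v0, v1], Int.isCoprime_iff_gcd_eq_one.mpr hv, ?_⟩
    ext i; fin_cases i
    · simpa [mul_comm] using h0
    · simpa [mul_comm] using h1

theorem Int.eq_smul_of_isCoprime {v w : Fin 2 → ℤ} {p q : ℤ} (hpq : p * v 0 + q * v 1 = 1)
    (hvw : v 0 * w 1 = v 1 * w 0) : w = (p * w 0 + q * w 1) • v := by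
  ext i; fin_cases i
  · show w 0 = (p * w 0 + q * w 1) * v 0
    linear_combination (-(w 0)) * hpq - q * hvw
  · show w 1 = (p * w 0 + q * w 1) * v 1
    linear_combination (-(w 1)) * hpq + p * hvw

theorem Int.exists_dotProduct_eq {u : Fin 2 → ℤ} {a : ℤ} (ha : (Int.gcd (u 0) (u 1) : ℤ) ∣ a) :
    ∃ y : Fin 2 → ℤ, u ⬝ᵥ y = a := by
  obtain ⟨r, rfl⟩ := ha
  refine ⟨![Int.gcdA (u 0) (u 1) * r, Int.gcdB (u 0) (u 1) * r], ?_⟩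
  simp only [dotProduct, Fin.sum_univ_two, cons_val_zero, cons_val_one, cons_val_fin_one,
    Int.gcd_eq_gcd_ab]
  ring

/-- With `p * v 0 + q * v 1 = 1`, the vectors `v` and `![-q, p]` form a basis of `ℤ²`; this map
sends `w = a • v + b • ![-q, p]` to `(a mod g, b)`. -/
def primitiveCoordMod (v : Fin 2 → ℤ) (p q : ℤ) (g : ℕ) : (Fin 2 → ℤ) →ₗ[ℤ] ZMod g × ℤ where
  toFun w := (((p * w 0 + q * w 1 : ℤ) : ZMod g), v 0 * w 1 - v 1 * w 0)
  map_add' w w' := by ext <;> simp <;> ring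
  map_smul' c w := by ext <;> simp <;> ring

section primitiveCoordMod

variable {v : Fin 2 → ℤ} {p q : ℤ} (hpq : p * v 0 + q * v 1 = 1) (g : ℕ)
include hpq

theorem primitiveCoordMod_surjective : Function.Surjective (primitiveCoordMod v p q g) := by
  rintro ⟨y, z⟩
  obtain ⟨a, rfl⟩ := ZMod.intCast_surjective y
  refine ⟨a • v + z • ![-q, p], Prod.ext ?_ ?_⟩
  · show ((p * (a * v 0 + z * -q) + q * (a * v 1 + z * p) : ℤ) : ZMod g) = a
    congr 1
    linear_combination a * hpq
  · show v 0 * (a * v 1 + z * p) - v 1 * (a * v 0 + z * -q) = z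
    linear_combination z * hpq

theorem range_vecMulVec_eq_ker_primitiveCoordMod (u : Fin 2 → ℤ) :
    LinearMap.range (vecMulVec v u).mulVecLin =
      LinearMap.ker (primitiveCoordMod v p q (Int.gcd (u 0) (u 1))) := by
  apply le_antisymm
  · rintro _ ⟨y, rfl⟩
    have hdvd : (Int.gcd (u 0) (u 1) : ℤ) ∣ u ⬝ᵥ y := by
      simp only [dotProduct, Fin.sum_univ_two]
      exact dvd_add ((Int.gcd_dvd_left _ _).mul_right _) ((Int.gcd_dvd_right _ _).mul_right _)
    simp only [LinearMap.mem_ker, mulVecLin_apply, vecMulVec_mulVec, op_smul_eq_smul,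
      primitiveCoordMod, LinearMap.coe_mk, AddHom.coe_mk, Pi.smul_apply, smul_eq_mul,
      Prod.mk_eq_zero]
    constructor
    · rw [ZMod.intCast_zmod_eq_zero_iff_dvd]
      convert hdvd using 1
      linear_combination (u ⬝ᵥ y) * hpq
    · ring
  · intro w hw
    simp only [LinearMap.mem_ker, primitiveCoordMod, LinearMap.coe_mk, AddHom.coe_mk,
      Prod.mk_eq_zero, ZMod.intCast_zmod_eq_zero_iff_dvd, sub_eq_zero] at hw
    obtain ⟨y, hy⟩ := Int.exists_dotProduct_eq hw.1
    refine ⟨y, ?_⟩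
    rw [mulVecLin_apply, vecMulVec_mulVec, op_smul_eq_smul, hy]
    exact (Int.eq_smul_of_isCoprime hpq hw.2).symm

end primitiveCoordMod

theorem Matrix.nonempty_quot_range_vecMulVec_addEquiv {v : Fin 2 → ℤ}
    (hv : IsCoprime (v 0) (v 1)) (u : Fin 2 → ℤ) :
    Nonempty (((Fin 2 → ℤ) ⧸ LinearMap.range (vecMulVec v u).mulVecLin) ≃+
      (ZMod (Int.gcd (u 0) (u 1)) × ℤ)) := by
  obtain ⟨p, q, hpq⟩ := hv
  exact ⟨((Submodule.quotEquivOfEq _ _ (range_vecMulVec_eq_ker_primitiveCoordMod hpq u)).trans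
    ((primitiveCoordMod v p q _).quotKerEquivOfSurjective
      (primitiveCoordMod_surjective hpq _))).toAddEquiv⟩

theorem Matrix.exists_vecMulVec_of_det_eq_zero {M : Matrix (Fin 2) (Fin 2) ℤ} (h : M.det = 0) :
    ∃ v u : Fin 2 → ℤ, IsCoprime (v 0) (v 1) ∧ M = vecMulVec v u := by
  obtain ⟨g, v, hv, hg⟩ := Int.exists_isCoprime_smul_eq (fun i => M i 0)
  by_cases hg0 : g = 0
  · obtain ⟨t, v', hv', ht⟩ := Int.exists_isCoprime_smul_eq (fun i => M i 1)
    refine ⟨v', ![0, t], hv', ?_⟩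
    ext i j; fin_cases j
    · simpa [vecMulVec, hg0] using congrFun hg i
    · simpa [vecMulVec, mul_comm] using congrFun ht i
  · obtain ⟨p, q, hpq⟩ := hv
    have hpar : v 0 * M 1 1 = v 1 * M 0 1 := by
      have h0 : M 0 0 = g * v 0 := by simpa using congrFun hg 0
      have h1 : M 1 0 = g * v 1 := by simpa using congrFun hg 1
      rw [det_fin_two, h0, h1] at h
      exact mul_left_cancel₀ hg0 (by linear_combination h)
    have ht := Int.eq_smul_of_isCoprime (w := fun i => M i 1) hpq hpar
    refine ⟨v, ![g, p * M 0 1 + q * M 1 1], ⟨p, q, hpq⟩, ?_⟩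
    ext i j; fin_cases j
    · simpa [vecMulVec, mul_comm] using congrFun hg i
    · simpa [vecMulVec, mul_comm] using congrFun ht i

theorem Matrix.dvd_vecMulVec_iff {v : Fin 2 → ℤ} (hv : IsCoprime (v 0) (v 1)) {u : Fin 2 → ℤ}
    {d : ℤ} : (∀ i j, d ∣ vecMulVec v u i j) ↔ ∀ j, d ∣ u j := by
  obtain ⟨p, q, hpq⟩ := hv
  refine ⟨fun h j => ?_, fun h i j => (h j).mul_left _⟩
  have hu : u j = p * vecMulVec v u 0 j + q * vecMulVec v u 1 j := by
    simp only [vecMulVec_apply]; linear_combination (-u j) * hpq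
  rw [hu]
  exact dvd_add ((h 0 j).mul_left _) ((h 1 j).mul_left _)

theorem Matrix.gcd_dvd_apply_of_trace_eq_zero_of_det_eq_zero {N : Matrix (Fin 2) (Fin 2) ℤ}
    (htr : N.trace = 0) (hdet : N.det = 0) (i j : Fin 2) :
    (Int.gcd (N 1 0) (N 0 1) : ℤ) ∣ N i j := by
  have h11 : N 1 1 = -N 0 0 := by rw [trace_fin_two] at htr; linear_combination htr
  have h00 : (Int.gcd (N 1 0) (N 0 1) : ℤ) ∣ N 0 0 := by
    rw [← Int.pow_dvd_pow_iff two_ne_zero,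
      show N 0 0 ^ 2 = -(N 1 0 * N 0 1) by rw [det_fin_two, h11] at hdet; linear_combination -hdet]
    exact (pow_two (Int.gcd (N 1 0) (N 0 1) : ℤ) ▸
      mul_dvd_mul (Int.gcd_dvd_left _ _) (Int.gcd_dvd_right _ _)).neg_right
  fin_cases i <;> fin_cases j
  · exact h00
  · exact Int.gcd_dvd_right _ _
  · exact Int.gcd_dvd_left _ _
  · simpa [h11] using h00

theorem Matrix.gcd_eq_gcd_apply_of_eq_vecMulVec {N : Matrix (Fin 2) (Fin 2) ℤ}
    {v u : Fin 2 → ℤ} (hv : IsCoprime (v 0) (v 1)) (hN : N = vecMulVec v u)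
    (h : ∀ i j, (Int.gcd (N 1 0) (N 0 1) : ℤ) ∣ N i j) :
    Int.gcd (u 0) (u 1) = Int.gcd (N 1 0) (N 0 1) := by
  subst hN
  have hu := (dvd_vecMulVec_iff hv).mp h
  have hN := (dvd_vecMulVec_iff hv).mpr
    (Fin.forall_fin_two.mpr ⟨Int.gcd_dvd_left (u 0) (u 1), Int.gcd_dvd_right (u 0) (u 1)⟩)
  exact Nat.dvd_antisymm (Int.natCast_dvd_natCast.mp (Int.dvd_coe_gcd (hN 1 0) (hN 0 1)))
    (Int.natCast_dvd_natCast.mp (Int.dvd_coe_gcd (hu 0) (hu 1)))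

/-- If `θ ∈ GL(2, ℤ)` has `det θ = 1` and `θ - I` has rank `1`, then
`ℤ² / (θ - I)ℤ² ≅ ℤ/gcd(β, γ) ⊕ ℤ`, where `β = θ 1 0` and `γ = θ 0 1`. -/
theorem coker_rank1_detOne (θ : Matrix (Fin 2) (Fin 2) ℤ)
    (hdet : θ.det = 1) (hr : (θ - 1).rank = 1) :
    Nonempty (((Fin 2 → ℤ) ⧸ LinearMap.range (θ - 1).mulVecLin) ≃+
      (ZMod (Int.gcd (θ 1 0) (θ 0 1)) × ℤ)) := by
  have hN : (θ - 1).det = 0 := det_eq_zero_of_rank_lt (by simp [hr])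
  have htr : (θ - 1).trace = 0 := by
    rw [trace_sub, trace_one, Fintype.card_fin]
    push_cast
    linear_combination det_sub_one_fin_two θ - hN + hdet
  obtain ⟨v, u, hv, hvu⟩ := exists_vecMulVec_of_det_eq_zero hN
  have hgcd : Int.gcd (u 0) (u 1) = Int.gcd (θ 1 0) (θ 0 1) := by
    simpa using gcd_eq_gcd_apply_of_eq_vecMulVec hv hvu
      (gcd_dvd_apply_of_trace_eq_zero_of_det_eq_zero htr hN)
  rw [hvu, ← hgcd]
  exact nonempty_quot_range_vecMulVec_addEquiv hv u
end
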